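/- arXiv:1509.06093 — 14 statements merged into one kernel-verified Lean document; each statement's English description precedes it below -/
import Mathlib

section
/- For all positive integers n, the chocolate number A(1,n) equals (n-1)!. -/
/-!
Along a single row or column every break splits a `1 × k` bar into bars of lengths `i` and
`k - i`, and the two pieces are then broken independently, their `k - 2` remaining breaks being
interleaved in `C(k - 2, i - 1)` ways. With `(i - 1)!` and `(k - i - 1)!` ways for the pieces,
every one of the `k - 1` first breaks contributes `(k - 2)!`, which gives `(k - 1)!` by induction.
-/

open Finset Nat

theorem choose_mul_factorial_mul_factorial_of_mem_Icc {k i : ℕ} (hi : i ∈ Icc 1 (k - 1)) :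
    (k - 2).choose (i - 1) * (i - 1)! * (k - i - 1)! = (k - 2)! := by
  rw [mem_Icc] at hi
  have hsub : k - 2 - (i - 1) = k - i - 1 := by omega
  rw [← hsub]
  exact choose_mul_factorial_mul_factorial (by omega)

theorem sum_choose_mul_factorial_mul_factorial {k : ℕ} (hk : 2 ≤ k) :
    ∑ i ∈ Icc 1 (k - 1), (k - 2).choose (i - 1) * (i - 1)! * (k - i - 1)! = (k - 1)! := by
  rw [sum_congr rfl fun i hi => choose_mul_factorial_mul_factorial_of_mem_Icc hi, sum_const,
    card_Icc, smul_eq_mul]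
  obtain ⟨j, rfl⟩ : ∃ j, k = j + 2 := ⟨k - 2, by omega⟩
  simp [factorial_succ]

theorem eq_factorial_of_choose_recurrence (f : ℕ → ℕ) (h1 : f 1 = 1)
    (hrec : ∀ k, 2 ≤ k →
      f k = ∑ i ∈ Icc 1 (k - 1), (k - 2).choose (i - 1) * f i * f (k - i)) :
    ∀ k, 1 ≤ k → f k = (k - 1)! := by
  intro k
  induction k using Nat.strong_induction_on with
  | _ k ih =>
    intro hk
    rcases hk.eq_or_lt with rfl | hk
    · exact h1
    rw [hrec k hk, ← sum_choose_mul_factorial_mul_factorial hk]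
    refine sum_congr rfl fun i hi => ?_
    rw [mem_Icc] at hi
    rw [ih i (by omega) hi.1, ih (k - i) (by omega) (by omega)]

/-- For all positive integers n, the chocolate number A(1,n) equals (n-1)!. -/
theorem chocolate_one_row (A : ℕ → ℕ → ℕ)
    (hA11 : A 1 1 = 1)
    (hArec : ∀ m n : ℕ, 1 ≤ m → 1 ≤ n → 1 < m * n →
      A m n =
        (∑ i ∈ Finset.Icc 1 (m - 1),
            Nat.choose (m * n - 2) (i * n - 1) * A i n * A (m - i) n) +
        ∑ i ∈ Finset.Icc 1 (n - 1),
            Nat.choose (m * n - 2) (i * m - 1) * A i m * A (n - i) m) :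
    ∀ n : ℕ, 1 ≤ n → A 1 n = Nat.factorial (n - 1) := by
  have hcol : ∀ k, 1 ≤ k → A k 1 = (k - 1)! :=
    eq_factorial_of_choose_recurrence (A · 1) hA11 fun k hk => by
      simpa using hArec k 1 (by omega) le_rfl (by omega)
  intro n hn
  rcases hn.eq_or_lt with rfl | hn
  · exact hA11
  -- For `m = 1` only the second sum survives, and it is the recurrence of the column `A · 1`.
  rw [hArec 1 n le_rfl hn.le (by omega), ← hcol n hn.le, hArec n 1 hn.le le_rfl (by omega)]
  simp
end

section
/- For all integers m, n > 1, the 2-adic valuation of A(m,n) is at least m + n - 2; that is, 2^{m+n-2} divides A(m,n). -/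
/-!
Strong induction on `m + n`, treating the two sums of the recursion separately. In the sum over
horizontal first breaks of an `m × n` bar with `m ≥ 3`, the terms `2 ≤ i ≤ m - 2` carry
`2 ^ ((i + n - 2) + (m - i + n - 2))`, while the terms `i = 1` and `i = m - 1` are equal by the
symmetry of the binomial coefficient, so together they gain the missing factor `2`. For `m = 2`
the sum is `C(2n-2, n-1) · A(1,n)² = (2n-2)!` because `A(1,n) = (n-1)!`, and
`(2k)! = 2^k k! (2k-1)‼` is divisible by `2^(k+1)` once `k ≥ 2`.
-/

open Finset
open scoped Nat

namespace Chocolate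

/-- Sequences of breaks whose first break is horizontal, cutting off the top `i` rows; the
binomial coefficient interleaves the remaining `i * n - 1` and `(m - i) * n - 1` breaks of the two
pieces. -/
def breakSum (A : ℕ → ℕ → ℕ) (m n : ℕ) : ℕ :=
  ∑ i ∈ Icc 1 (m - 1), (m * n - 2).choose (i * n - 1) * A i n * A (m - i) n

def Recursion (A : ℕ → ℕ → ℕ) : Prop :=
  ∀ m n, 1 ≤ m → 1 ≤ n → 1 < m * n → A m n = breakSum A m n + breakSum A n m

@[simp]
lemma breakSum_one_left (A : ℕ → ℕ → ℕ) (n : ℕ) : breakSum A 1 n = 0 := by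
  simp [breakSum]

lemma breakSum_two_left (A : ℕ → ℕ → ℕ) (n : ℕ) :
    breakSum A 2 n = (2 * n - 2).choose (n - 1) * A 1 n * A 1 n := by
  simp [breakSum]

variable {A : ℕ → ℕ → ℕ}

lemma Recursion.symm (hA : Recursion A) {m n : ℕ} (hm : 1 ≤ m) (hn : 1 ≤ n) :
    A m n = A n m := by
  by_cases h : 1 < m * n
  · rw [hA m n hm hn h, hA n m hn hm (by rwa [mul_comm]), add_comm]
  · obtain ⟨rfl, rfl⟩ : m = 1 ∧ n = 1 := ⟨by nlinarith, by nlinarith⟩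
    rfl

lemma Recursion.apply_succ_one (hA : Recursion A) (h11 : A 1 1 = 1) (k : ℕ) :
    A (k + 1) 1 = k ! := by
  induction k using Nat.strong_induction_on with
  | _ k ih =>
  rcases k with _ | k
  · exact h11
  have hterm : ∀ i ∈ Icc 1 (k + 1), k.choose (i - 1) * A i 1 * A (k + 2 - i) 1 = k ! := by
    intro i hi
    obtain ⟨hi1, hik⟩ := mem_Icc.mp hi
    obtain ⟨j, rfl⟩ : ∃ j, i = j + 1 := ⟨i - 1, by omega⟩
    rw [show k + 2 - (j + 1) = k - j + 1 by omega, ih j (by omega), ih (k - j) (by omega),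
      Nat.add_sub_cancel, Nat.choose_mul_factorial_mul_factorial (by omega)]
  rw [hA (k + 2) 1 (by omega) le_rfl (by omega), breakSum_one_left, add_zero, breakSum,
    show (k + 2) * 1 - 2 = k by omega, show k + 2 - 1 = k + 1 by omega]
  simp only [mul_one]
  rw [sum_congr rfl hterm, sum_const, Nat.card_Icc, smul_eq_mul, Nat.add_sub_cancel,
    Nat.factorial_succ]

lemma Recursion.apply_one (hA : Recursion A) (h11 : A 1 1 = 1) {n : ℕ} (hn : 1 ≤ n) :
    A 1 n = (n - 1)! := by
  obtain ⟨k, rfl⟩ : ∃ k, n = k + 1 := ⟨n - 1, by omega⟩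
  rw [hA.symm le_rfl hn, hA.apply_succ_one h11, Nat.add_sub_cancel]

lemma two_pow_succ_dvd_factorial_two_mul {k : ℕ} (hk : 2 ≤ k) : 2 ^ (k + 1) ∣ (2 * k)! := by
  obtain ⟨j, rfl⟩ : ∃ j, k = j + 1 := ⟨k - 1, by omega⟩
  rw [show 2 * (j + 1) = 2 * j + 1 + 1 by ring, Nat.factorial_eq_mul_doubleFactorial,
    show 2 * j + 1 + 1 = 2 * (j + 1) by ring, Nat.doubleFactorial_two_mul, pow_succ, mul_assoc]
  exact mul_dvd_mul_left _ (dvd_mul_of_dvd_left (Nat.dvd_factorial two_pos hk) _)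

lemma Recursion.two_pow_dvd_breakSum_two_left (hA : Recursion A) (h11 : A 1 1 = 1) {n : ℕ}
    (hn : 3 ≤ n) : 2 ^ n ∣ breakSum A 2 n := by
  obtain ⟨k, rfl⟩ : ∃ k, n = k + 1 := ⟨n - 1, by omega⟩
  rw [breakSum_two_left, hA.apply_one h11 (by omega), Nat.add_sub_cancel,
    show 2 * (k + 1) - 2 = k + k by omega, Nat.add_choose_mul_factorial_mul_factorial, ← two_mul]
  exact two_pow_succ_dvd_factorial_two_mul (by omega)

lemma two_pow_dvd_breakSum_of_three_le {m n : ℕ} (hm : 3 ≤ m) (hn : 2 ≤ n)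
    (ih : ∀ i, 2 ≤ i → i < m → 2 ^ (i + n - 2) ∣ A i n) :
    2 ^ (m + n - 2) ∣ breakSum A m n := by
  set T : ℕ → ℕ := fun i ↦ (m * n - 2).choose (i * n - 1) * A i n * A (m - i) n with hT
  have hmiddle : ∀ i ∈ Ioc 1 (m - 2), 2 ^ (m + n - 2) ∣ T i := by
    intro i hi
    obtain ⟨hi1, hi2⟩ := mem_Ioc.mp hi
    calc 2 ^ (m + n - 2) ∣ 2 ^ (i + n - 2) * 2 ^ (m - i + n - 2) := by
          rw [← pow_add]; exact pow_dvd_pow 2 (by omega)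
      _ ∣ T i := by
          simp only [hT, mul_assoc]
          exact dvd_mul_of_dvd_right
            (mul_dvd_mul (ih i (by omega) (by omega)) (ih (m - i) (by omega) (by omega))) _
  have hends : T 1 + T (m - 1) = 2 * ((m * n - 2).choose (n - 1) * A 1 n * A (m - 1) n) := by
    have hsymm : (m * n - 2).choose ((m - 1) * n - 1) = (m * n - 2).choose (n - 1) :=
      Nat.choose_symm_of_eq_add <| by
        have := Nat.mul_le_mul_right n hm
        rw [Nat.sub_one_mul]
        omega
    simp only [hT, one_mul, hsymm, show m - (m - 1) = 1 by omega]
    ring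
  have hlast : 2 ^ (m + n - 3) ∣ A (m - 1) n := by
    simpa [show m - 1 + n - 2 = m + n - 3 by omega] using ih (m - 1) (by omega) (by omega)
  have hsplit : breakSum A m n = (T 1 + T (m - 1)) + ∑ i ∈ Ioc 1 (m - 2), T i := by
    have := sum_Ioc_succ_top (show 1 ≤ m - 2 by omega) T
    rw [show m - 2 + 1 = m - 1 by omega] at this
    rw [breakSum, Icc_eq_cons_Ioc (by omega), sum_cons, this]
    ring
  rw [hsplit, hends]
  refine dvd_add ?_ (dvd_sum hmiddle)
  rw [show m + n - 2 = m + n - 3 + 1 by omega, pow_succ']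
  exact mul_dvd_mul_left 2 (dvd_mul_of_dvd_right hlast _)

lemma Recursion.two_pow_dvd_breakSum (hA : Recursion A) (h11 : A 1 1 = 1) {m n : ℕ}
    (hm : 2 ≤ m) (hn : 2 ≤ n) (hmn : 5 ≤ m + n)
    (ih : ∀ i, 2 ≤ i → i < m → 2 ^ (i + n - 2) ∣ A i n) :
    2 ^ (m + n - 2) ∣ breakSum A m n := by
  rcases hm.eq_or_lt with rfl | hm
  · rw [Nat.add_sub_cancel_left]
    exact hA.two_pow_dvd_breakSum_two_left h11 (by omega)
  · exact two_pow_dvd_breakSum_of_three_le hm hn ih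

end Chocolate

/-- For all integers m, n > 1, the 2-adic valuation of A(m,n) is at least
m + n - 2; that is, 2^(m+n-2) divides A(m,n). -/
theorem chocolate_two_adic (A : ℕ → ℕ → ℕ)
    (hA11 : A 1 1 = 1)
    (hArec : ∀ m n : ℕ, 1 ≤ m → 1 ≤ n → 1 < m * n →
      A m n =
        (∑ i ∈ Finset.Icc 1 (m - 1),
            Nat.choose (m * n - 2) (i * n - 1) * A i n * A (m - i) n) +
        ∑ i ∈ Finset.Icc 1 (n - 1),
            Nat.choose (m * n - 2) (i * m - 1) * A i m * A (n - i) m) :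
    ∀ m n : ℕ, 1 < m → 1 < n → 2 ^ (m + n - 2) ∣ A m n := by
  have hA : Chocolate.Recursion A := fun m n hm hn hmn ↦ by
    rw [hArec m n hm hn hmn, Chocolate.breakSum, Chocolate.breakSum, mul_comm n m]
  intro m n hm hn
  obtain ⟨s, hs⟩ : ∃ s, m + n = s := ⟨_, rfl⟩
  induction s using Nat.strong_induction_on generalizing m n with
  | _ s ih =>
  by_cases h22 : m = 2 ∧ n = 2
  · obtain ⟨rfl, rfl⟩ := h22
    rw [hA 2 2 (by norm_num) (by norm_num) (by norm_num), Chocolate.breakSum_two_left,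
      hA.apply_one hA11 (by norm_num)]
    norm_num
  rw [hA m n (by omega) (by omega) (by nlinarith)]
  refine dvd_add (hA.two_pow_dvd_breakSum hA11 hm hn (by omega) ?_) ?_
  · exact fun i hi _ ↦ ih (i + n) (by omega) i n hi hn rfl
  · rw [add_comm m n]
    exact hA.two_pow_dvd_breakSum hA11 hn hm (by omega)
      fun i hi _ ↦ ih (i + m) (by omega) i m hi hm rfl
end

section
/- For all integers n > 1, 2^n divides A(2,n). -/
/-!
The recursion is symmetric in `m` and `n`, and for a single row each of its `n - 1` terms equals
`C(n - 2, i - 1) (i - 1)! (n - i - 1)! = (n - 2)!`, so `A(n, 1) = A(1, n) = (n - 1)!`.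
Hence, for `n ≥ 2`,
`A(n, 2) = (2n - 2)! + ∑_{0 < i < n} C(2n - 2, 2i - 1) A(i, 2) A(n - i, 2)`,
and `2 ^ n ∣ A(n, 2)` follows by strong induction: `(2n - 2)! = 2 ^ (n - 1) (n - 1)! (2n - 3)‼`
with `(n - 1)!` even once `n ≥ 3`, the inner terms carry `2 ^ i · 2 ^ (n - i)`, and the two edge
terms carry `C(2n - 2, 1) = 2 (n - 1)` times `2 ^ (n - 1)`.
-/

open Finset Nat

def ChocolateRec (A : ℕ → ℕ → ℕ) : Prop :=
  ∀ m n : ℕ, 1 ≤ m → 1 ≤ n → 1 < m * n →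
    A m n =
      (∑ i ∈ Icc 1 (m - 1), choose (m * n - 2) (i * n - 1) * A i n * A (m - i) n) +
      ∑ i ∈ Icc 1 (n - 1), choose (m * n - 2) (i * m - 1) * A i m * A (n - i) m

theorem two_pow_succ_dvd_factorial_two_mul {m : ℕ} (hm : 2 ≤ m) : 2 ^ (m + 1) ∣ (2 * m)! := by
  obtain ⟨k, rfl⟩ : ∃ k, m = k + 1 := ⟨m - 1, by omega⟩
  have hfac : (2 * (k + 1))! = 2 ^ (k + 1) * (k + 1)! * (2 * k + 1)‼ := by
    rw [show 2 * (k + 1) = (2 * k + 1) + 1 by ring, factorial_eq_mul_doubleFactorial,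
      show 2 * k + 1 + 1 = 2 * (k + 1) by ring, doubleFactorial_two_mul]
  rw [hfac, pow_succ]
  exact (mul_dvd_mul_left _ (dvd_factorial two_pos hm)).mul_right _

namespace ChocolateRec

variable {A : ℕ → ℕ → ℕ}

theorem symm (hA : ChocolateRec A) {m n : ℕ} (hm : 1 ≤ m) (hn : 1 ≤ n) : A m n = A n m := by
  rcases Nat.lt_or_ge 1 (m * n) with h | h
  · rw [hA m n hm hn h, hA n m hn hm (by rwa [mul_comm]), mul_comm n m, add_comm]
  · obtain ⟨rfl, rfl⟩ : m = 1 ∧ n = 1 := by constructor <;> nlinarith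
    rfl

theorem apply_one_right (hA : ChocolateRec A) (h11 : A 1 1 = 1) {n : ℕ} (hn : 1 ≤ n) :
    A n 1 = (n - 1)! := by
  induction n using Nat.strong_induction_on with
  | _ n ih =>
    rcases hn.eq_or_lt with rfl | hn
    · exact h11
    have hterm : ∀ i ∈ Icc 1 (n - 1),
        choose (n * 1 - 2) (i * 1 - 1) * A i 1 * A (n - i) 1 = (n - 2)! := by
      intro i hi
      rw [mem_Icc] at hi
      rw [ih i (by omega) hi.1, ih (n - i) (by omega) (by omega), mul_one, mul_one,
        show n - i - 1 = n - 2 - (i - 1) by omega]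
      exact choose_mul_factorial_mul_factorial (by omega)
    rw [hA n 1 (by omega) le_rfl (by omega), Icc_eq_empty_of_lt (by omega : 1 > 1 - 1), sum_empty,
      add_zero, sum_const_nat hterm, card_Icc, show n - 2 = n - 1 - 1 by omega]
    exact mul_factorial_pred (by omega)

theorem apply_two_right (hA : ChocolateRec A) (h11 : A 1 1 = 1) {n : ℕ} (hn : 2 ≤ n) :
    A n 2 = (∑ i ∈ Icc 1 (n - 1), choose (2 * n - 2) (2 * i - 1) * A i 2 * A (n - i) 2) +
      (2 * n - 2)! := by
  have h1n : A 1 n = (n - 1)! := by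
    rw [hA.symm le_rfl (by omega), hA.apply_one_right h11 (by omega)]
  rw [hA n 2 (by omega) (by omega) (by omega), show Icc 1 (2 - 1) = {1} from rfl, sum_singleton,
    one_mul, h1n]
  have hcentral := choose_mul_factorial_mul_factorial (show n - 1 ≤ 2 * n - 2 by omega)
  rw [show 2 * n - 2 - (n - 1) = n - 1 by omega] at hcentral
  congr 1
  · exact sum_congr rfl fun i _ => by rw [mul_comm n 2, mul_comm i 2]
  · rw [mul_comm n 2, hcentral]

theorem two_pow_dvd_apply_two_right (hA : ChocolateRec A) (h11 : A 1 1 = 1) {n : ℕ}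
    (hn : 2 ≤ n) : 2 ^ n ∣ A n 2 := by
  have hA12 : A 1 2 = 1 := by
    rw [hA.symm le_rfl (by omega), hA.apply_one_right h11 (by omega)]
    rfl
  induction n using Nat.strong_induction_on with
  | _ n ih =>
    rw [hA.apply_two_right h11 hn]
    rcases hn.eq_or_lt with rfl | hn
    · simp [hA12]
    have hedge : 2 ^ n ∣ choose (2 * n - 2) 1 * A (n - 1) 2 := by
      rw [choose_one_right, show 2 * n - 2 = 2 * (n - 1) by omega, mul_assoc,
        show 2 ^ n = 2 * 2 ^ (n - 1) by rw [← pow_succ']; congr 1; omega]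
      exact mul_dvd_mul_left 2 ((ih (n - 1) (by omega) (by omega)).mul_left _)
    refine dvd_add (dvd_sum fun i hi => ?_) ?_
    · rw [mem_Icc] at hi
      rcases hi.1.eq_or_lt with rfl | hi1
      · simpa [hA12] using hedge
      rcases hi.2.eq_or_lt with rfl | hi2
      · rw [choose_symm_of_eq_add (by omega : 2 * n - 2 = (2 * (n - 1) - 1) + 1),
          show n - (n - 1) = 1 by omega, hA12, mul_one]
        exact hedge
      · rw [mul_assoc, show 2 ^ n = 2 ^ i * 2 ^ (n - i) by rw [← pow_add]; congr 1; omega]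
        exact (mul_dvd_mul (ih i (by omega) (by omega))
          (ih (n - i) (by omega) (by omega))).mul_left _
    · rw [show 2 * n - 2 = 2 * (n - 1) by omega]
      exact Nat.sub_add_cancel (by omega : 1 ≤ n) ▸
        two_pow_succ_dvd_factorial_two_mul (by omega)

end ChocolateRec

/-- For all integers n > 1, 2^n divides A(2,n). -/
theorem chocolate2_two_adic (A : ℕ → ℕ → ℕ)
    (hA11 : A 1 1 = 1)
    (hArec : ∀ m n : ℕ, 1 ≤ m → 1 ≤ n → 1 < m * n →
      A m n =
        (∑ i ∈ Finset.Icc 1 (m - 1),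
            Nat.choose (m * n - 2) (i * n - 1) * A i n * A (m - i) n) +
        ∑ i ∈ Finset.Icc 1 (n - 1),
            Nat.choose (m * n - 2) (i * m - 1) * A i m * A (n - i) m) :
    ∀ n : ℕ, 1 < n → 2 ^ n ∣ A 2 n := by
  intro n hn
  rw [ChocolateRec.symm hArec (by omega) (by omega)]
  exact ChocolateRec.two_pow_dvd_apply_two_right hArec hA11 hn
end

section
/- For all positive integers n, 2^{2n-2} divides A(n,n). -/
/-!
Write `S(m,n) = ∑_{0<i<m} C(mn-2, in-1) A(i,n) A(m-i,n)`, so that `A(m,n) = S(m,n) + S(n,m)`.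
The reflection `i ↦ m - i` fixes every term of `S(m,n)`, so the terms pair up, and the unpaired
middle term `i = m/2` carries an even central binomial coefficient: `S(m,n)` has one factor of 2
more than its terms. For a square bar the two half-sums coincide, which gives one more factor
of 2. By strong induction on `m + n` this yields `2 ^ e(m,n) ∣ A(m,n)` for an exponent with
`e(m,n) ≤ e(i,n) + e(m-i,n) + 1`, with one more unit to spare when `m = n`, and `e(n,n) = 2n - 2`.
-/

theorem dvd_sum_of_involution {ι : Type*} {s : Finset ι} {f : ι → ℕ} {d : ℕ} (σ : ι → ι)
    (hσ : ∀ i ∈ s, σ i ∈ s) (hσσ : ∀ i ∈ s, σ (σ i) = i) (hf : ∀ i ∈ s, f (σ i) = f i)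
    (hpair : ∀ i ∈ s, d ∣ 2 * f i) (hfix : ∀ i ∈ s, σ i = i → d ∣ f i) :
    d ∣ ∑ i ∈ s, f i := by
  rw [← ZMod.natCast_eq_zero_iff, Nat.cast_sum]
  refine Finset.sum_involution (fun i _ => σ i) (fun i hi => ?_) (fun i hi hne hσi => ?_) hσ hσσ
  · rw [hf i hi, ← Nat.cast_add, ← two_mul, ZMod.natCast_eq_zero_iff]
    exact hpair i hi
  · exact hne ((ZMod.natCast_eq_zero_iff _ _).2 (hfix i hi hσi))

namespace Chocolate

def exponent (m n : ℕ) : ℕ := (3 * min m n + max m n) / 2 - 2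

lemma exponent_comm (m n : ℕ) : exponent m n = exponent n m := by
  unfold exponent; omega

lemma exponent_self (n : ℕ) : exponent n n = 2 * n - 2 := by
  unfold exponent; omega

lemma exponent_le_add_of_ne {m n i : ℕ} (hn : 1 ≤ n) (hmn : m ≠ n) (hi : i ∈ Finset.Icc 1 (m - 1)) :
    exponent m n ≤ exponent i n + exponent (m - i) n + 1 := by
  rw [Finset.mem_Icc] at hi
  unfold exponent; omega

lemma exponent_self_le_add {n i : ℕ} (hi : i ∈ Finset.Icc 1 (n - 1)) :
    exponent n n ≤ exponent i n + exponent (n - i) n + 2 := by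
  rw [Finset.mem_Icc] at hi
  unfold exponent; omega

lemma two_lt_mul_of_exponent_ne_zero {m n : ℕ} (hm : 1 ≤ m) (hn : 1 ≤ n)
    (h : exponent m n ≠ 0) : 2 < m * n := by
  have : 3 ≤ m ∨ 3 ≤ n ∨ (2 ≤ m ∧ 2 ≤ n) := by unfold exponent at h; omega
  rcases this with h | h | ⟨h, h'⟩ <;> nlinarith

lemma choose_sub_mul_sub_one {m n i : ℕ} (hn : 1 ≤ n) (hi : i ∈ Finset.Icc 1 (m - 1)) :
    (m * n - 2).choose ((m - i) * n - 1) = (m * n - 2).choose (i * n - 1) := by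
  rw [Finset.mem_Icc] at hi
  have hin : 1 ≤ i * n := Nat.mul_le_mul hi.1 hn
  have hlt : i * n < m * n := Nat.mul_lt_mul_of_pos_right (by omega) hn
  rw [Nat.sub_mul, ← Nat.choose_symm (by omega)]
  congr 1
  omega

variable (A : ℕ → ℕ → ℕ)

def halfSum (m n : ℕ) : ℕ :=
  ∑ i ∈ Finset.Icc 1 (m - 1), Nat.choose (m * n - 2) (i * n - 1) * A i n * A (m - i) n

lemma two_pow_dvd_halfSum {m n K : ℕ} (e : ℕ → ℕ) (hn : 1 ≤ n) (hmn : 2 < m * n)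
    (hA : ∀ i ∈ Finset.Icc 1 (m - 1), 2 ^ e i ∣ A i n)
    (hK : ∀ i ∈ Finset.Icc 1 (m - 1), K ≤ e i + e (m - i) + 1) :
    2 ^ K ∣ halfSum A m n := by
  have hreflect : ∀ i ∈ Finset.Icc 1 (m - 1), m - i ∈ Finset.Icc 1 (m - 1) := by
    simp only [Finset.mem_Icc]; omega
  have hterm : ∀ i ∈ Finset.Icc 1 (m - 1), ∀ c, 2 ∣ c → 2 ^ K ∣ c * A i n * A (m - i) n := by
    intro i hi c hc
    refine (pow_dvd_pow 2 (hK i hi)).trans ?_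
    rw [show 2 ^ (e i + e (m - i) + 1) = 2 * 2 ^ e i * 2 ^ e (m - i) by ring]
    exact mul_dvd_mul (mul_dvd_mul hc (hA i hi)) (hA _ (hreflect i hi))
  refine dvd_sum_of_involution (fun i => m - i) hreflect ?_ ?_ ?_ ?_
  · simp only [Finset.mem_Icc]; omega
  · intro i hi
    rw [choose_sub_mul_sub_one hn hi, Nat.sub_sub_self (by simp only [Finset.mem_Icc] at hi; omega)]
    ring
  · intro i hi
    rw [← mul_assoc, ← mul_assoc]
    exact hterm i hi _ (dvd_mul_right 2 _)
  · intro i hi hmid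
    -- the middle term is `C(2k, k) * A(i,n)^2` with `k = in - 1 ≥ 1`
    refine hterm i hi _ ?_
    have hk : m * n - 2 = 2 * (i * n - 1) := by
      rw [show m = 2 * i by omega] at hmn ⊢
      rw [mul_assoc] at hmn ⊢
      omega
    rw [hk, ← Nat.centralBinom_eq_two_mul_choose]
    exact Nat.two_dvd_centralBinom_of_one_le (by omega)

theorem two_pow_exponent_dvd
    (hArec : ∀ m n : ℕ, 1 ≤ m → 1 ≤ n → 1 < m * n → A m n = halfSum A m n + halfSum A n m)
    {m n : ℕ} (hm : 1 ≤ m) (hn : 1 ≤ n) : 2 ^ exponent m n ∣ A m n := by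
  induction hs : m + n using Nat.strong_induction_on generalizing m n with
  | _ s ih =>
  obtain h0 | h0 := eq_or_ne (exponent m n) 0
  · simp [h0]
  have hmn := two_lt_mul_of_exponent_ne_zero hm hn h0
  have ih₁ : ∀ i ∈ Finset.Icc 1 (m - 1), 2 ^ exponent i n ∣ A i n := fun i hi => by
    rw [Finset.mem_Icc] at hi; exact ih (i + n) (by omega) (by omega) hn rfl
  have ih₂ : ∀ i ∈ Finset.Icc 1 (n - 1), 2 ^ exponent i m ∣ A i m := fun i hi => by
    rw [Finset.mem_Icc] at hi; exact ih (i + m) (by omega) (by omega) hm rfl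
  rw [hArec m n hm hn (by omega)]
  obtain rfl | hne := eq_or_ne m n
  · rw [← two_mul, show exponent m m = (exponent m m - 1) + 1 by omega, pow_succ']
    refine mul_dvd_mul_left 2 (two_pow_dvd_halfSum A _ hn hmn ih₁ fun i hi => ?_)
    have := exponent_self_le_add hi
    omega
  · refine dvd_add (two_pow_dvd_halfSum A _ hn hmn ih₁ fun i hi => exponent_le_add_of_ne hn hne hi)
      (two_pow_dvd_halfSum A _ hm (by rwa [mul_comm]) ih₂ fun i hi => ?_)
    rw [exponent_comm]
    exact exponent_le_add_of_ne hm hne.symm hi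

end Chocolate

theorem chocolate_square_two_adic_general (A : ℕ → ℕ → ℕ)
    (hArec : ∀ m n : ℕ, 1 ≤ m → 1 ≤ n → 1 < m * n →
      A m n =
        (∑ i ∈ Finset.Icc 1 (m - 1),
            Nat.choose (m * n - 2) (i * n - 1) * A i n * A (m - i) n) +
        ∑ i ∈ Finset.Icc 1 (n - 1),
            Nat.choose (m * n - 2) (i * m - 1) * A i m * A (n - i) m) :
    ∀ n : ℕ, 1 ≤ n → 2 ^ (2 * n - 2) ∣ A n n := by
  intro n hn
  rw [← Chocolate.exponent_self]
  refine Chocolate.two_pow_exponent_dvd A (fun m n hm hn hmn => ?_) hn hn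
  rw [hArec m n hm hn hmn, Chocolate.halfSum, Chocolate.halfSum, mul_comm n m]

/-- For all positive integers n, 2^(2n-2) divides A(n,n). -/
theorem chocolate_square_two_adic (A : ℕ → ℕ → ℕ)
    (hA11 : A 1 1 = 1)
    (hArec : ∀ m n : ℕ, 1 ≤ m → 1 ≤ n → 1 < m * n →
      A m n =
        (∑ i ∈ Finset.Icc 1 (m - 1),
            Nat.choose (m * n - 2) (i * n - 1) * A i n * A (m - i) n) +
        ∑ i ∈ Finset.Icc 1 (n - 1),
            Nat.choose (m * n - 2) (i * m - 1) * A i m * A (n - i) m) :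
    ∀ n : ℕ, 1 ≤ n → 2 ^ (2 * n - 2) ∣ A n n :=
  chocolate_square_two_adic_general A hArec
end

section
/- For every positive integer n, A(2,n) = (2n-2)! + Σ_{m=1}^{n-1} C(2n-2, 2m-1)·A(2,m)·A(2,n-m). -/
/-!
In the recursion for `A 2 n` the first sum is the single term `C(2n-2, n-1) · A(1,n)²`, and
`A(1,n) = (n-1)!` because each of the `n - 1` terms of the recursion for `A(1,n)` equals `(n-2)!`;
so that term is `(2n-2)!`. The recursion is invariant under swapping `m` and `n`, hence `A` is
symmetric, which turns the second sum into the stated one.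
-/

open Nat Finset

def IsChocolateRecursion (A : ℕ → ℕ → ℕ) : Prop :=
  ∀ m n : ℕ, 1 ≤ m → 1 ≤ n → 1 < m * n →
    A m n =
      (∑ i ∈ Icc 1 (m - 1), choose (m * n - 2) (i * n - 1) * A i n * A (m - i) n) +
      ∑ i ∈ Icc 1 (n - 1), choose (m * n - 2) (i * m - 1) * A i m * A (n - i) m

namespace IsChocolateRecursion

variable {A : ℕ → ℕ → ℕ}

theorem symm (hA : IsChocolateRecursion A) {m n : ℕ} (hm : 1 ≤ m) (hn : 1 ≤ n) :
    A m n = A n m := by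
  rcases Nat.lt_or_ge 1 (m * n) with h | h
  · rw [hA m n hm hn h, hA n m hn hm (by rwa [Nat.mul_comm]), Nat.mul_comm n m, Nat.add_comm]
  · obtain rfl : m = 1 := by nlinarith
    obtain rfl : n = 1 := by nlinarith
    rfl

theorem one_left (hA : IsChocolateRecursion A) (h11 : A 1 1 = 1) (n : ℕ) :
    A 1 (n + 1) = n ! := by
  induction n using Nat.strong_induction_on with
  | _ n ih =>
    rcases n with _ | k
    · exact h11
    have hterm : ∀ i ∈ Icc 1 (k + 1),
        choose (1 * (k + 2) - 2) (i * 1 - 1) * A i 1 * A (k + 2 - i) 1 = k ! := by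
      intro i hi
      obtain ⟨j, rfl⟩ : ∃ j, i = j + 1 := ⟨i - 1, by grind⟩
      have hj : j ≤ k := by grind
      rw [hA.symm (by omega) le_rfl, hA.symm (by omega) le_rfl, ih j (by omega),
        show k + 2 - (j + 1) = (k - j) + 1 by omega, ih (k - j) (by omega)]
      simpa using choose_mul_factorial_mul_factorial hj
    rw [hA 1 (k + 2) le_rfl (by omega) (by omega), Nat.sub_self, Icc_eq_empty (by omega),
      sum_empty, zero_add, show k + 2 - 1 = k + 1 from rfl, sum_congr rfl hterm, sum_const,
      card_Icc, smul_eq_mul, Nat.add_sub_cancel, factorial_succ]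

end IsChocolateRecursion

/-- For every positive integer n,
A(2,n) = (2n-2)! + Σ_{m=1}^{n-1} C(2n-2, 2m-1)·A(2,m)·A(2,n-m). -/
theorem chocolate2_recursion (A : ℕ → ℕ → ℕ)
    (hA11 : A 1 1 = 1)
    (hArec : ∀ m n : ℕ, 1 ≤ m → 1 ≤ n → 1 < m * n →
      A m n =
        (∑ i ∈ Finset.Icc 1 (m - 1),
            Nat.choose (m * n - 2) (i * n - 1) * A i n * A (m - i) n) +
        ∑ i ∈ Finset.Icc 1 (n - 1),
            Nat.choose (m * n - 2) (i * m - 1) * A i m * A (n - i) m) :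
    ∀ n : ℕ, 1 ≤ n →
      A 2 n = Nat.factorial (2 * n - 2) +
        ∑ m ∈ Finset.Icc 1 (n - 1),
          Nat.choose (2 * n - 2) (2 * m - 1) * A 2 m * A 2 (n - m) := by
  have hA : IsChocolateRecursion A := hArec
  intro n hn
  obtain ⟨k, rfl⟩ : ∃ k, n = k + 1 := ⟨n - 1, by omega⟩
  rw [hA 2 (k + 1) (by norm_num) hn (by omega)]
  congr 1
  · rw [show 2 - 1 = 1 from rfl, Icc_self, sum_singleton, hA.one_left hA11,
      show 2 * (k + 1) - 2 = k + k by omega, show 1 * (k + 1) - 1 = k by omega]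
    exact add_choose_mul_factorial_mul_factorial k k
  · refine sum_congr rfl fun i hi => ?_
    rw [mem_Icc] at hi
    rw [Nat.mul_comm i 2, hA.symm (n := 2) hi.1 (by norm_num),
      hA.symm (n := 2) (by omega) (by norm_num)]
end

section
/- Let n and k be positive integers. If k divides B(i) for every integer i with ⌊(n+1)/2⌋ ≤ i ≤ n-1, and k divides (2n-2)!, then k divides B(j) for every integer j ≥ n. -/
/-! In the recurrence for `B j`, every product `B m * B (j - m)` has a factor whose index lies
in the upper half `[⌈j/2⌉, j - 1]`, and `(2n - 2)!` divides `(2j - 2)!` for `j ≥ n`. Since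
`⌈n/2⌉ ≤ ⌈j/2⌉`, strong induction on `j ≥ n` carries divisibility by `k` upwards. -/

section Chocolate2

variable {B : ℕ → ℕ}

theorem dvd_of_dvd_upper_half
    (hBrec : ∀ n : ℕ, 2 ≤ n →
      B n = Nat.factorial (2 * n - 2) +
        ∑ m ∈ Finset.Icc 1 (n - 1),
          Nat.choose (2 * n - 2) (2 * m - 1) * B m * B (n - m))
    {j k : ℕ} (hj : 2 ≤ j) (hfac : k ∣ Nat.factorial (2 * j - 2))
    (hhalf : ∀ i, (j + 1) / 2 ≤ i → i < j → k ∣ B i) : k ∣ B j := by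
  rw [hBrec j hj]
  refine dvd_add hfac (Finset.dvd_sum fun m hm => ?_)
  obtain ⟨hm1, hmj⟩ := Finset.mem_Icc.mp hm
  rcases le_total m (j - m) with hle | hle
  · exact (hhalf (j - m) (by omega) (by omega)).mul_left _
  · exact ((hhalf m (by omega) (by omega)).mul_left _).mul_right _

end Chocolate2

theorem chocolate2_div_propagates_general (B : ℕ → ℕ)
    (hBrec : ∀ n : ℕ, 2 ≤ n →
      B n = Nat.factorial (2 * n - 2) +
        ∑ m ∈ Finset.Icc 1 (n - 1),
          Nat.choose (2 * n - 2) (2 * m - 1) * B m * B (n - m)) :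
    ∀ n k : ℕ, 1 ≤ n → 1 ≤ k →
      (∀ i : ℕ, (n + 1) / 2 ≤ i → i ≤ n - 1 → k ∣ B i) →
      k ∣ Nat.factorial (2 * n - 2) →
      ∀ j : ℕ, n ≤ j → k ∣ B j := by
  intro n k hn _ hdiv hfac j hnj
  induction j using Nat.strong_induction_on with
  | _ j ih =>
  obtain rfl | hj := (show j = 1 ∨ 2 ≤ j by omega)
  · have hk : k ∣ 1 := by rwa [show 2 * n - 2 = 0 by omega] at hfac
    exact hk.trans (one_dvd _)
  · refine dvd_of_dvd_upper_half hBrec hj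
      (hfac.trans (Nat.factorial_dvd_factorial (by omega))) fun i hi hij => ?_
    rcases le_or_gt n i with hni | hin
    · exact ih i hij hni
    · exact hdiv i (by omega) (by omega)

/-- Let n and k be positive integers. If k divides B(i) for every integer i
with ⌊(n+1)/2⌋ ≤ i ≤ n-1, and k divides (2n-2)!, then k divides B(j) for every j ≥ n. -/
theorem chocolate2_div_propagates (B : ℕ → ℕ)
    (hB1 : B 1 = 1)
    (hBrec : ∀ n : ℕ, 2 ≤ n →
      B n = Nat.factorial (2 * n - 2) +
        ∑ m ∈ Finset.Icc 1 (n - 1),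
          Nat.choose (2 * n - 2) (2 * m - 1) * B m * B (n - m)) :
    ∀ n k : ℕ, 1 ≤ n → 1 ≤ k →
      (∀ i : ℕ, (n + 1) / 2 ≤ i → i ≤ n - 1 → k ∣ B i) →
      k ∣ Nat.factorial (2 * n - 2) →
      ∀ j : ℕ, n ≤ j → k ∣ B j :=
  chocolate2_div_propagates_general B hBrec
end

section
/- For every integer i ≥ 6, 11 divides B(i). -/
/-!
If `p = 2k - 1` is prime and `i > k`, then `p` divides `(2i - 2)!`, and in every summand of the
recursion for `B(i)` either `m ≥ k`, or `i - m ≥ k`, or both `2m - 1` and `2(i - m) - 1` are below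
`p` while their sum `2i - 2` is not, so that `p` divides `C(2i - 2, 2m - 1)`. Hence `p ∣ B(k)`
propagates to every `B(i)` with `i ≥ k` by strong induction. For `p = 11`, `k = 6` it remains to
compute `B(6) = 7918592 = 11 · 719872`.
-/

open Finset Nat

def SatisfiesChocolate2Recurrence (B : ℕ → ℕ) : Prop :=
  ∀ n : ℕ, 2 ≤ n →
    B n = (2 * n - 2)! + ∑ m ∈ Icc 1 (n - 1), (2 * n - 2).choose (2 * m - 1) * B m * B (n - m)

theorem prime_dvd_chocolate2_summand {B : ℕ → ℕ} {p k : ℕ} (hp : p.Prime) (hpk : p = 2 * k - 1)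
    {i m : ℕ} (hki : k < i) (hm : m ∈ Icc 1 (i - 1)) (ih : ∀ j, k ≤ j → j < i → p ∣ B j) :
    p ∣ (2 * i - 2).choose (2 * m - 1) * B m * B (i - m) := by
  rw [mem_Icc] at hm
  by_cases hkm : k ≤ m
  · exact (ih m hkm (by omega)).mul_left _ |>.mul_right _
  by_cases hkim : k ≤ i - m
  · exact (ih (i - m) hkim (by omega)).mul_left _
  have hchoose : p ∣ (2 * i - 2).choose (2 * m - 1) :=
    hp.dvd_choose (by omega) (by omega) (by omega)
  exact hchoose.mul_right _ |>.mul_right _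

namespace SatisfiesChocolate2Recurrence

variable {B : ℕ → ℕ} {p k : ℕ}

theorem prime_dvd_of_le (hB : SatisfiesChocolate2Recurrence B) (hp : p.Prime)
    (hpk : p = 2 * k - 1) (hk : p ∣ B k) : ∀ i, k ≤ i → p ∣ B i := by
  intro i
  induction i using Nat.strong_induction_on with
  | _ i ih =>
    intro hki
    rcases hki.eq_or_lt with rfl | hki
    · exact hk
    have hp2 : 2 ≤ p := hp.two_le
    rw [hB i (by omega)]
    refine dvd_add (hp.dvd_factorial.2 (by omega)) (dvd_sum fun m hm => ?_)
    exact prime_dvd_chocolate2_summand hp hpk hki hm fun j hkj hji => ih j hji hkj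

theorem apply_six (hB : SatisfiesChocolate2Recurrence B) (hB1 : B 1 = 1) : B 6 = 7918592 := by
  have hB2 : B 2 = 4 := by
    rw [hB 2 le_rfl]
    simp [hB1]
  have hB3 : B 3 = 56 := by
    rw [hB 3 (by norm_num)]
    simp [sum_Icc_succ_top, factorial, choose_eq_descFactorial_div_factorial, descFactorial, *]
  have hB4 : B 4 = 1712 := by
    rw [hB 4 (by norm_num)]
    simp [sum_Icc_succ_top, factorial, choose_eq_descFactorial_div_factorial, descFactorial, *]
  have hB5 : B 5 = 92800 := by
    rw [hB 5 (by norm_num)]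
    simp [sum_Icc_succ_top, factorial, choose_eq_descFactorial_div_factorial, descFactorial, *]
  rw [hB 6 (by norm_num)]
  simp [sum_Icc_succ_top, factorial, choose_eq_descFactorial_div_factorial, descFactorial, *]

end SatisfiesChocolate2Recurrence

/-- For every integer i ≥ 6, 11 divides B(i). -/
theorem chocolate2_div_eleven (B : ℕ → ℕ)
    (hB1 : B 1 = 1)
    (hBrec : ∀ n : ℕ, 2 ≤ n →
      B n = Nat.factorial (2 * n - 2) +
        ∑ m ∈ Finset.Icc 1 (n - 1),
          Nat.choose (2 * n - 2) (2 * m - 1) * B m * B (n - m)) :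
    ∀ i : ℕ, 6 ≤ i → 11 ∣ B i := by
  have hB : SatisfiesChocolate2Recurrence B := hBrec
  refine hB.prime_dvd_of_le (k := 6) (by norm_num) rfl ?_
  rw [hB.apply_six hB1]
  norm_num
end

section
/- For every integer i ≥ 13, 5 divides B(i). -/
/-!
Reducing the recursion modulo 5 gives a recursion that determines the residues of `B` uniquely.
The sequence with residues `1, 4, 1, 2, 0, 2, 1, 0, 2, 0, 0, 4` at `1, …, 12` and `0` from `13`
on satisfies it: up to `n = 24` this is a finite check, and for `n ≥ 25` the factorial
`(2n-2)!` is divisible by `5` while every product `B m * B (n-m)` has a factor with index `≥ 13`.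
-/

open Finset

def IsChocolate2Seq {R : Type*} [Semiring R] (f : ℕ → R) : Prop :=
  f 1 = 1 ∧ ∀ n, 2 ≤ n → f n = ((2 * n - 2).factorial : R) +
    ∑ m ∈ Icc 1 (n - 1), ((2 * n - 2).choose (2 * m - 1) : R) * f m * f (n - m)

namespace IsChocolate2Seq

variable {R : Type*} [Semiring R]

theorem natCast {B : ℕ → ℕ} (hB : IsChocolate2Seq B) : IsChocolate2Seq (fun n ↦ (B n : R)) := by
  refine ⟨by simp [hB.1], fun n hn ↦ ?_⟩
  simp [hB.2 n hn]

theorem eq_of_one_le {f g : ℕ → R} (hf : IsChocolate2Seq f) (hg : IsChocolate2Seq g) :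
    ∀ n, 1 ≤ n → f n = g n := by
  intro n
  induction n using Nat.strong_induction_on with
  | _ n ih =>
    intro hn
    obtain rfl | hn2 := eq_or_lt_of_le hn
    · rw [hf.1, hg.1]
    rw [hf.2 n hn2, hg.2 n hn2]
    refine congrArg _ (sum_congr rfl fun m hm ↦ ?_)
    rw [mem_Icc] at hm
    rw [ih m (by omega) hm.1, ih (n - m) (by omega) (by omega)]

end IsChocolate2Seq

theorem sum_mul_eq_zero_of_eventually_zero {R : Type*} [Semiring R] (c : ℕ → R) {f : ℕ → R}
    {N n : ℕ} (hf : ∀ k, N ≤ k → f k = 0) (hn : 2 * N ≤ n + 1) :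
    ∑ m ∈ Icc 1 (n - 1), c m * f m * f (n - m) = 0 := by
  refine sum_eq_zero fun m hm ↦ ?_
  rw [mem_Icc] at hm
  rcases le_or_gt N m with hm' | hm'
  · rw [hf m hm', mul_zero, zero_mul]
  · rw [hf (n - m) (by omega), mul_zero]

-- `n - 1` truncates, so the value at `0` is junk; the recursion never reads it.
def chocolate2Mod5 (n : ℕ) : ZMod 5 := [1, 4, 1, 2, 0, 2, 1, 0, 2, 0, 0, 4].getD (n - 1) 0

theorem chocolate2Mod5_eq_zero {n : ℕ} (hn : 13 ≤ n) : chocolate2Mod5 n = 0 :=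
  List.getD_eq_default _ _ (by simp; omega)

theorem isChocolate2Seq_chocolate2Mod5 : IsChocolate2Seq chocolate2Mod5 := by
  refine ⟨rfl, fun n hn ↦ ?_⟩
  rcases lt_or_ge n 25 with hsmall | hlarge
  · have hcheck : ∀ n < 25, 2 ≤ n → chocolate2Mod5 n = ((2 * n - 2).factorial : ZMod 5) +
        ∑ m ∈ Icc 1 (n - 1), ((2 * n - 2).choose (2 * m - 1) : ZMod 5) *
          chocolate2Mod5 m * chocolate2Mod5 (n - m) := by
      decide
    exact hcheck n hsmall hn
  · have hfact : ((2 * n - 2).factorial : ZMod 5) = 0 :=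
      (ZMod.natCast_eq_zero_iff _ _).2 (Nat.dvd_factorial (by norm_num) (by omega))
    rw [chocolate2Mod5_eq_zero (by omega), hfact, zero_add,
      sum_mul_eq_zero_of_eventually_zero _ (fun _ ↦ chocolate2Mod5_eq_zero) (by omega)]

/-- For every integer i ≥ 13, 5 divides B(i). -/
theorem chocolate2_div_five (B : ℕ → ℕ)
    (hB1 : B 1 = 1)
    (hBrec : ∀ n : ℕ, 2 ≤ n →
      B n = Nat.factorial (2 * n - 2) +
        ∑ m ∈ Finset.Icc 1 (n - 1),
          Nat.choose (2 * n - 2) (2 * m - 1) * B m * B (n - m)) :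
    ∀ i : ℕ, 13 ≤ i → 5 ∣ B i := by
  intro i hi
  have hB : IsChocolate2Seq B := ⟨hB1, hBrec⟩
  rw [← ZMod.natCast_eq_zero_iff,
    hB.natCast.eq_of_one_le isChocolate2Seq_chocolate2Mod5 i (by omega)]
  exact chocolate2Mod5_eq_zero hi
end

section
/- Let f be the formal power series over ℚ defined by f = Σ_{n≥1} (B(n)/(2n-1)!)·Xⁿ. Then f satisfies the identity (1 - X)·f² = 2X(1 - X)·f′ - (1 - X)·f - X in ℚ⟦X⟧, where f′ denotes the formal derivative of f. -/
/-!
With `a n = B n / (2n-1)!`, dividing the recurrence by `(2n-2)!` turns its binomial convolution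
into a Cauchy product: `(2n-1) a n = 1 + ∑_{0<m<n} a m * a (n-m)` for `n ≥ 1`. Read off
coefficients, this is `f² = 2X f' - f - X/(1-X)`; multiplying by `1 - X` clears the geometric
series `X/(1-X) = X * mk 1`.
-/

open PowerSeries Finset Nat

namespace PowerSeries

theorem coeff_sq_eq_sum_Icc {R : Type*} [CommSemiring R] {f : R⟦X⟧}
    (hf : constantCoeff f = 0) (n : ℕ) :
    coeff n (f ^ 2) = ∑ m ∈ Icc 1 (n - 1), coeff m f * coeff (n - m) f := by
  rw [sq, coeff_mul, Nat.sum_antidiagonal_eq_sum_range_succ_mk]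
  refine (sum_subset (fun m hm => ?_) (fun m hm hmn => ?_)).symm
  · simp only [mem_Icc, mem_range] at hm ⊢
    omega
  · simp only [mem_range, mem_Icc, not_and_or, not_le] at hm hmn
    obtain hm0 | hmn := hmn
    · simp [Nat.lt_one_iff.mp hm0, hf]
    · simp [show n - m = 0 by omega, hf]

theorem coeff_succ_X_mul_derivative {R : Type*} [CommSemiring R] (f : R⟦X⟧) (n : ℕ) :
    coeff (n + 1) (X * derivative R f) = (n + 1) * coeff (n + 1) f := by
  rw [coeff_succ_X_mul, coeff_derivative, mul_comm]

end PowerSeries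

section Chocolate

variable (B : ℕ → ℕ) (hB1 : B 1 = 1)
    (hBrec : ∀ n : ℕ, 2 ≤ n →
      B n = (2 * n - 2)! + ∑ m ∈ Icc 1 (n - 1), (2 * n - 2).choose (2 * m - 1) * B m * B (n - m))
    {f : ℚ⟦X⟧} (hf : ∀ n : ℕ, coeff n f = if n = 0 then 0 else (B n : ℚ) / (2 * n - 1)!)

theorem chocolate_summand_eq {n m : ℕ} (hm : m ∈ Icc 1 (n - 1)) :
    (B m : ℚ) / (2 * m - 1)! * (B (n - m) / (2 * (n - m) - 1)!) =
      ((2 * n - 2).choose (2 * m - 1) * B m * B (n - m) : ℕ) / (2 * n - 2)! := by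
  rw [mem_Icc] at hm
  have hle : 2 * m - 1 ≤ 2 * n - 2 := by omega
  rw [Nat.cast_mul, Nat.cast_mul, Nat.cast_choose ℚ hle,
    show 2 * n - 2 - (2 * m - 1) = 2 * (n - m) - 1 by omega]
  field_simp

include hBrec in
theorem chocolate_recurrence_div_factorial {n : ℕ} (hn : 2 ≤ n) :
    (2 * n - 1 : ℚ) * (B n / (2 * n - 1)!) =
      1 + ∑ m ∈ Icc 1 (n - 1), (B m : ℚ) / (2 * m - 1)! * (B (n - m) / (2 * (n - m) - 1)!) := by
  have hfact : ((2 * n - 1)! : ℚ) = (2 * n - 1 : ℚ) * (2 * n - 2)! := by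
    rw [show 2 * n - 1 = 2 * n - 2 + 1 by omega, Nat.factorial_succ]
    push_cast [show 2 ≤ 2 * n by omega]
    ring
  have hn' : (2 * n - 1 : ℚ) ≠ 0 := by
    have : (2 : ℚ) ≤ n := by exact_mod_cast hn
    linarith
  rw [sum_congr rfl fun m hm => chocolate_summand_eq B hm, ← sum_div, hfact, hBrec n hn]
  push_cast
  field_simp

include hB1 hBrec hf

theorem chocolate_coeff_sq {n : ℕ} (hn : 1 ≤ n) :
    coeff n (f ^ 2) = (2 * n - 1) * coeff n f - 1 := by
  have hf0 : constantCoeff f = 0 := by simpa using hf 0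
  rw [coeff_sq_eq_sum_Icc hf0]
  obtain rfl | hn := hn.eq_or_lt
  · norm_num [hf, hB1]
  rw [sum_congr rfl fun m hm => by rw [hf m, hf (n - m), if_neg, if_neg] <;> grind,
    hf n, if_neg (by omega), chocolate_recurrence_div_factorial B hBrec hn]
  ring

theorem chocolate_sq_eq_riccati : f ^ 2 = 2 * X * derivative ℚ f - f - X * PowerSeries.mk 1 := by
  ext n
  rcases n with _ | n
  · have hf0 : constantCoeff f = 0 := by simpa using hf 0
    simp [hf0]
  · rw [chocolate_coeff_sq B hB1 hBrec hf n.succ_pos, map_sub, map_sub, mul_assoc,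
      two_mul (X * _), map_add, coeff_succ_X_mul_derivative, coeff_succ_X_mul, coeff_mk,
      Pi.one_apply]
    push_cast
    ring

end Chocolate

/-- Let f = Σ_{n≥1} (B(n)/(2n-1)!)·Xⁿ in ℚ⟦X⟧. Then
(1 - X)·f² = 2X(1 - X)·f′ - (1 - X)·f - X. -/
theorem chocolate2_genfun_riccati (B : ℕ → ℕ)
    (hB1 : B 1 = 1)
    (hBrec : ∀ n : ℕ, 2 ≤ n →
      B n = Nat.factorial (2 * n - 2) +
        ∑ m ∈ Finset.Icc 1 (n - 1),
          Nat.choose (2 * n - 2) (2 * m - 1) * B m * B (n - m))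
    (f : PowerSeries ℚ)
    (hf : ∀ n : ℕ, PowerSeries.coeff (R := ℚ) n f =
      if n = 0 then 0 else (B n : ℚ) / (Nat.factorial (2 * n - 1) : ℚ)) :
    (1 - PowerSeries.X) * f ^ 2 =
      2 * PowerSeries.X * (1 - PowerSeries.X) * PowerSeries.derivative ℚ f
        - (1 - PowerSeries.X) * f - PowerSeries.X := by
  rw [chocolate_sq_eq_riccati B hB1 hBrec hf]
  linear_combination (-X : ℚ⟦X⟧) * mk_one_mul_one_sub_eq_one ℚ
end

section
/- For a prime p, the sequence P(n) is eventually divisible by p (i.e., there exists N such that p divides P(n) for all n ≥ N) if and only if p = 2, or p = 5, or p ≡ 1 (mod 5), or p ≡ 4 (mod 5). -/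
/-- The sequence P(n) = Π_{i=1}^{n} ((4i-5)² - 5). -/
def P (n : ℕ) : ℤ := ∏ i ∈ Finset.Icc 1 n, ((4 * (i : ℤ) - 5) ^ 2 - 5)

/-!
Since the partial products accumulate factors, a prime divides `P n` for all large `n` iff it
divides some factor `(4i - 5)² - 5`. For `p = 2` the first factor `-4` is even. For odd `p`, `4` is
invertible mod `p`, so `4i - 5` runs through all residues and `p` divides a factor iff `5` is a
square mod `p`; as `5 ≡ 1 (mod 4)`, quadratic reciprocity turns this into `p` being a square
mod `5`, i.e. `p ≡ 0, ±1 (mod 5)`.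
-/

theorem Prime.exists_forall_le_dvd_prod_Icc_iff {α : Type*} [CommMonoidWithZero α] {p : α}
    (hp : Prime p) (f : ℕ → α) :
    (∃ N : ℕ, ∀ n : ℕ, N ≤ n → p ∣ ∏ i ∈ Finset.Icc 1 n, f i) ↔
      ∃ i : ℕ, 1 ≤ i ∧ p ∣ f i := by
  constructor
  · rintro ⟨N, hN⟩
    obtain ⟨i, hi, hdvd⟩ := (hp.dvd_finsetProd_iff _).mp (hN N le_rfl)
    exact ⟨i, (Finset.mem_Icc.mp hi).1, hdvd⟩
  · rintro ⟨i, hi, hdvd⟩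
    exact ⟨i, fun n hn =>
      hdvd.trans <| Finset.dvd_prod_of_mem f <| Finset.mem_Icc.mpr ⟨hi, hn⟩⟩

theorem ZMod.exists_one_le_dvd_sq_sub_iff_isSquare {n : ℕ} [NeZero n] (a b c : ℤ)
    (ha : IsUnit (a : ZMod n)) :
    (∃ i : ℕ, 1 ≤ i ∧ (n : ℤ) ∣ (a * i - b) ^ 2 - c) ↔ IsSquare (c : ZMod n) := by
  simp only [← ZMod.intCast_zmod_eq_zero_iff_dvd, Int.cast_sub, Int.cast_pow, Int.cast_mul,
    Int.cast_natCast, sub_eq_zero]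
  constructor
  · rintro ⟨i, -, hi⟩
    exact ⟨a * i - b, by rw [← hi, sq]⟩
  · rintro ⟨r, hr⟩
    obtain ⟨i, hi⟩ := ZMod.natCast_zmod_surjective (ha.unit⁻¹ * (r + b) : ZMod n)
    refine ⟨i + n, by have := NeZero.pos n; omega, ?_⟩
    rw [Nat.cast_add, ZMod.natCast_self, add_zero, hi, ← mul_assoc, IsUnit.mul_val_inv, one_mul,
      add_sub_cancel_right, hr, sq]

theorem ZMod.isSquare_natCast_five_iff (n : ℕ) :
    IsSquare (n : ZMod 5) ↔ n % 5 = 0 ∨ n % 5 = 1 ∨ n % 5 = 4 := by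
  rw [← ZMod.natCast_mod]
  have hlt : n % 5 < 5 := Nat.mod_lt n (by norm_num)
  generalize n % 5 = k at hlt ⊢
  revert k
  decide

theorem ZMod.isSquare_five_iff {p : ℕ} [Fact p.Prime] (hp2 : p ≠ 2) :
    IsSquare (5 : ZMod p) ↔ p = 5 ∨ p % 5 = 1 ∨ p % 5 = 4 := by
  have : Fact (Nat.Prime 5) := ⟨by norm_num⟩
  have hdvd : p % 5 = 0 ↔ p = 5 := by
    rw [← Nat.dvd_iff_mod_eq_zero, Nat.prime_dvd_prime_iff_eq (by norm_num) Fact.out, eq_comm]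
  rw [← hdvd, ← ZMod.isSquare_natCast_five_iff]
  exact_mod_cast (ZMod.exists_sq_eq_prime_iff_of_mod_four_eq_one (p := 5) (by norm_num) hp2).symm

/-- For a prime p, the sequence P(n) is eventually divisible by p iff
p = 2, or p = 5, or p ≡ 1 (mod 5), or p ≡ 4 (mod 5). -/
theorem P_eventually_zero_iff (p : ℕ) (hp : p.Prime) :
    (∃ N : ℕ, ∀ n : ℕ, N ≤ n → (p : ℤ) ∣ P n) ↔
      p = 2 ∨ p = 5 ∨ p % 5 = 1 ∨ p % 5 = 4 := by
  have : Fact p.Prime := ⟨hp⟩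
  unfold P
  rw [(Nat.prime_iff_prime_int.mp hp).exists_forall_le_dvd_prod_Icc_iff]
  rcases eq_or_ne p 2 with rfl | hp2
  · simpa using ⟨1, le_rfl, by norm_num⟩
  have h4 : IsUnit ((4 : ℤ) : ZMod p) := by
    have h2 : (2 : ZMod p) ≠ 0 := Ring.two_ne_zero (by rwa [ZMod.ringChar_zmod_n])
    simpa [show (4 : ZMod p) = 2 ^ 2 by norm_num] using h2
  rw [ZMod.exists_one_le_dvd_sq_sub_iff_isSquare 4 5 5 h4]
  simpa [hp2] using ZMod.isSquare_five_iff hp2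
end

section
/- For every integer n > 1: if n ≡ 2 (mod 3) then B(n) ≡ 1 (mod 3), and if n ≡ 0 or 1 (mod 3) then B(n) ≡ 2 (mod 3). In particular, B(n) is never divisible by 3 for n > 1. -/
/-!
For `n ≥ 3` the term `(2n-2)!` vanishes mod 3, so `B n` mod 3 is the convolution of the
binomials `C(2n-2, 2m-1)` against the residues of `B m` and `B (n-m)`. Inductively these residues
are `1` on `{1} ∪ {m ≡ 2 mod 3}` and `-1` elsewhere, i.e. `-1 - χ` for the indicator `χ` of that
set, so the convolution splits into the full sum of odd-position binomials (`2^(2n-3) ≡ -1`),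
two copies of the sum of `C(2n-2, 2m-1)` over `m = 1` or `m ≡ 2`, and the sum over those `m`
with both `m` and `n - m` in the set. For `m ≡ 2` the position `2m-1` is an odd multiple of 3,
and Lucas' theorem `C(N, 3i) ≡ C(N/3, i)` turns that sum into the odd-position row sum
`2^(N/3 - 1)`. What is left is a check of the three residues of `n`.
-/

open Finset

theorem Nat.sum_range_filter_odd_choose {N : ℕ} (hN : N ≠ 0) :
    ∑ j ∈ range (N + 1) with Odd j, N.choose j = 2 ^ (N - 1) := by
  have htotal := Nat.sum_range_choose N
  have halternating := Int.alternating_sum_range_choose_of_ne hN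
  rw [← sum_filter_add_sum_filter_not _ Odd] at htotal halternating
  have hodd : ∑ j ∈ range (N + 1) with Odd j, (-1 : ℤ) ^ j * N.choose j =
      -∑ j ∈ range (N + 1) with Odd j, (N.choose j : ℤ) := by
    rw [← sum_neg_distrib]
    exact sum_congr rfl fun j hj => by rw [(mem_filter.1 hj).2.neg_one_pow]; ring
  have heven : ∑ j ∈ range (N + 1) with ¬Odd j, (-1 : ℤ) ^ j * N.choose j =
      ∑ j ∈ range (N + 1) with ¬Odd j, (N.choose j : ℤ) :=
    sum_congr rfl fun j hj => by
      rw [(Nat.not_odd_iff_even.1 (mem_filter.1 hj).2).neg_one_pow, one_mul]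
  rw [hodd, heven] at halternating
  have hpow : 2 ^ N = 2 * 2 ^ (N - 1) := by rw [← pow_succ']; congr 1; omega
  zify at htotal hpow ⊢
  linarith

theorem ZMod.natCast_choose_prime_mul (p : ℕ) [Fact p.Prime] (N i : ℕ) :
    (N.choose (p * i) : ZMod p) = (N / p).choose i := by
  have hlucas := Choose.choose_modEq_choose_mod_mul_choose_div_nat (n := N) (k := p * i) (p := p)
  rw [Nat.mul_mod_right, Nat.choose_zero_right, one_mul,
    Nat.mul_div_cancel_left _ (Fact.out : p.Prime).pos] at hlucas
  exact (ZMod.natCast_eq_natCast_iff _ _ _).2 hlucas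

section Reindexing

variable {M : Type*} [AddCommMonoid M] (n : ℕ) (f : ℕ → M)

theorem sum_Icc_two_mul_sub_one :
    ∑ m ∈ Icc 1 (n - 1), f (2 * m - 1) = ∑ j ∈ range (2 * n - 2 + 1) with Odd j, f j := by
  refine sum_nbij' (fun m => 2 * m - 1) (fun j => (j + 1) / 2) ?_ ?_ ?_ ?_ (fun _ _ => rfl) <;>
    intro a ha <;> simp only [mem_Icc, mem_filter, mem_range, Nat.odd_iff] at ha ⊢ <;> omega

-- `m ≡ 2 (mod 3)` exactly when `2m - 1` is an odd multiple of 3.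
theorem sum_Icc_filter_mod_three_eq_two :
    ∑ m ∈ Icc 1 (n - 1) with m % 3 = 2, f (2 * m - 1) =
      ∑ i ∈ range ((2 * n - 2) / 3 + 1) with Odd i, f (3 * i) := by
  refine sum_nbij' (fun m => (2 * m - 1) / 3) (fun i => (3 * i + 1) / 2) ?_ ?_ ?_ ?_ ?_ <;>
    intro a ha <;> simp only [mem_Icc, mem_filter, mem_range, Nat.odd_iff] at ha ⊢ <;>
    first | omega | congr 1; omega

end Reindexing

section BinomialSums

variable {n : ℕ}

theorem sum_choose_two_mul_sub_one_zmod_three (hn : 2 ≤ n) :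
    ∑ m ∈ Icc 1 (n - 1), ((2 * n - 2).choose (2 * m - 1) : ZMod 3) = -1 := by
  rw [sum_Icc_two_mul_sub_one n fun j => ((2 * n - 2).choose j : ZMod 3), ← Nat.cast_sum,
    Nat.sum_range_filter_odd_choose (by omega), Nat.cast_pow,
    show ((2 : ℕ) : ZMod 3) = -1 by decide, Odd.neg_one_pow (by rw [Nat.odd_iff]; omega)]

theorem sum_choose_two_mul_sub_one_filter_zmod_three (hn : 3 ≤ n) :
    ∑ m ∈ Icc 1 (n - 1) with m % 3 = 2, ((2 * n - 2).choose (2 * m - 1) : ZMod 3) =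
      (-1) ^ ((2 * n - 2) / 3 - 1) := by
  rw [sum_Icc_filter_mod_three_eq_two n fun j => ((2 * n - 2).choose j : ZMod 3)]
  simp_rw [ZMod.natCast_choose_prime_mul]
  rw [← Nat.cast_sum, Nat.sum_range_filter_odd_choose (by omega), Nat.cast_pow,
    show ((2 : ℕ) : ZMod 3) = -1 by decide]

theorem sum_choose_two_mul_sub_one_filter_one_or_zmod_three (hn : 3 ≤ n) :
    ∑ m ∈ Icc 1 (n - 1) with m = 1 ∨ m % 3 = 2, ((2 * n - 2).choose (2 * m - 1) : ZMod 3) =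
      ((2 * n - 2 : ℕ) : ZMod 3) + (-1) ^ ((2 * n - 2) / 3 - 1) := by
  have hinsert : {m ∈ Icc 1 (n - 1) | m = 1 ∨ m % 3 = 2} =
      insert 1 {m ∈ Icc 1 (n - 1) | m % 3 = 2} := by
    ext m
    simp only [mem_filter, mem_Icc, mem_insert]
    omega
  rw [hinsert, sum_insert (by simp), sum_choose_two_mul_sub_one_filter_zmod_three hn,
    Nat.choose_one_right]

theorem sum_filter_choose_two_mul_sub_one_reflect (p : ℕ → Prop) [DecidablePred p] :
    ∑ m ∈ Icc 1 (n - 1) with p (n - m), ((2 * n - 2).choose (2 * m - 1) : ZMod 3) =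
      ∑ m ∈ Icc 1 (n - 1) with p m, ((2 * n - 2).choose (2 * m - 1) : ZMod 3) := by
  refine sum_nbij' (n - ·) (n - ·) ?_ ?_ ?_ ?_ ?_ <;> intro m hm <;>
    simp only [mem_filter, mem_Icc] at hm ⊢
  · exact ⟨by omega, hm.2⟩
  · exact ⟨by omega, by rw [Nat.sub_sub_self (by omega)]; exact hm.2⟩
  · omega
  · omega
  · rw [Nat.choose_symm_of_eq_add (show 2 * n - 2 = (2 * m - 1) + (2 * (n - m) - 1) by omega)]

end BinomialSums

def chocolateResidue (m : ℕ) : ZMod 3 := if m = 1 ∨ m % 3 = 2 then 1 else -1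

-- As `2 = -1` in `ZMod 3`, `chocolateResidue = -1 - χ` for the indicator `χ` of the condition.
theorem chocolateResidue_mul (a b : ℕ) :
    chocolateResidue a * chocolateResidue b =
      1 + (if a = 1 ∨ a % 3 = 2 then 1 else 0) + (if b = 1 ∨ b % 3 = 2 then 1 else 0) +
        (if (a = 1 ∨ a % 3 = 2) ∧ (b = 1 ∨ b % 3 = 2) then 1 else 0) := by
  unfold chocolateResidue
  split_ifs <;> first | decide | tauto

theorem sum_choose_mul_chocolateResidue {n : ℕ} (hn : 3 ≤ n) :
    ∑ m ∈ Icc 1 (n - 1), ((2 * n - 2).choose (2 * m - 1) : ZMod 3) * chocolateResidue m *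
      chocolateResidue (n - m) = chocolateResidue n := by
  simp_rw [mul_assoc, chocolateResidue_mul, mul_add, mul_one, mul_boole, sum_add_distrib,
    ← sum_filter]
  rw [sum_filter_choose_two_mul_sub_one_reflect (fun m => m = 1 ∨ m % 3 = 2),
    sum_choose_two_mul_sub_one_zmod_three (by omega),
    sum_choose_two_mul_sub_one_filter_one_or_zmod_three hn]
  have hn1 : n ≠ 1 := by omega
  obtain h | h | h : n % 3 = 0 ∨ n % 3 = 1 ∨ n % 3 = 2 := by omega
  · have hboth : {m ∈ Icc 1 (n - 1) | (m = 1 ∨ m % 3 = 2) ∧ (n - m = 1 ∨ (n - m) % 3 = 2)} =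
        {1, n - 1} := by
      ext m
      simp only [mem_filter, mem_Icc, mem_insert, mem_singleton]
      omega
    rw [hboth, sum_pair (by omega), Nat.choose_one_right,
      Nat.choose_symm_of_eq_add (show 2 * n - 2 = 2 * (n - 1) - 1 + 1 by omega),
      Nat.choose_one_right, ← ZMod.natCast_mod, show (2 * n - 2) % 3 = 1 by omega,
      Even.neg_one_pow (by rw [Nat.even_iff]; omega)]
    simp only [chocolateResidue, h, hn1]
    decide
  · have hboth : {m ∈ Icc 1 (n - 1) | (m = 1 ∨ m % 3 = 2) ∧ (n - m = 1 ∨ (n - m) % 3 = 2)} =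
        {m ∈ Icc 1 (n - 1) | m % 3 = 2} := by
      ext m
      simp only [mem_filter, mem_Icc]
      omega
    rw [hboth, sum_choose_two_mul_sub_one_filter_zmod_three hn, ← ZMod.natCast_mod,
      show (2 * n - 2) % 3 = 0 by omega, Odd.neg_one_pow (by rw [Nat.odd_iff]; omega)]
    simp only [chocolateResidue, h, hn1]
    decide
  · have hboth : {m ∈ Icc 1 (n - 1) | (m = 1 ∨ m % 3 = 2) ∧ (n - m = 1 ∨ (n - m) % 3 = 2)} =
        ∅ := by
      ext m
      simp only [mem_filter, mem_Icc, notMem_empty, iff_false]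
      omega
    rw [hboth, sum_empty, ← ZMod.natCast_mod, show (2 * n - 2) % 3 = 2 by omega,
      Odd.neg_one_pow (by rw [Nat.odd_iff]; omega)]
    simp only [chocolateResidue, h, hn1]
    decide

theorem natCast_eq_chocolateResidue {B : ℕ → ℕ} (hB1 : B 1 = 1)
    (hBrec : ∀ n : ℕ, 2 ≤ n →
      B n = Nat.factorial (2 * n - 2) +
        ∑ m ∈ Icc 1 (n - 1), Nat.choose (2 * n - 2) (2 * m - 1) * B m * B (n - m))
    {n : ℕ} (hn : 1 ≤ n) : (B n : ZMod 3) = chocolateResidue n := by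
  induction n using Nat.strong_induction_on with
  | _ n ih =>
  obtain rfl | rfl | hn3 : n = 1 ∨ n = 2 ∨ 3 ≤ n := by omega
  · rw [hB1]
    rfl
  · have hB2 : B 2 = 4 := by simp [hBrec 2 le_rfl, hB1]
    rw [hB2]
    decide
  · have hfactorial : ((2 * n - 2).factorial : ZMod 3) = 0 :=
      (ZMod.natCast_eq_zero_iff _ _).2 (Nat.dvd_factorial (by norm_num) (by omega))
    rw [hBrec n (by omega), Nat.cast_add, hfactorial, zero_add, Nat.cast_sum,
      ← sum_choose_mul_chocolateResidue hn3]
    refine sum_congr rfl fun m hm => ?_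
    rw [mem_Icc] at hm
    rw [Nat.cast_mul, Nat.cast_mul, ih m (by omega) hm.1, ih (n - m) (by omega) (by omega)]

/-- For every integer n > 1: if n ≡ 2 (mod 3) then B(n) ≡ 1 (mod 3), and
if n ≡ 0 or 1 (mod 3) then B(n) ≡ 2 (mod 3). In particular, 3 never divides B(n) for n > 1. -/
theorem chocolate2_mod_three (B : ℕ → ℕ)
    (hB1 : B 1 = 1)
    (hBrec : ∀ n : ℕ, 2 ≤ n →
      B n = Nat.factorial (2 * n - 2) +
        ∑ m ∈ Finset.Icc 1 (n - 1),
          Nat.choose (2 * n - 2) (2 * m - 1) * B m * B (n - m)) :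
    ∀ n : ℕ, 1 < n →
      (n % 3 = 2 → B n % 3 = 1) ∧
      (n % 3 = 0 ∨ n % 3 = 1 → B n % 3 = 2) ∧
      ¬ (3 ∣ B n) := by
  intro n hn
  have hmod : B n % 3 = if n % 3 = 2 then 1 else 2 := by
    rw [← ZMod.val_natCast, natCast_eq_chocolateResidue hB1 hBrec hn.le, chocolateResidue,
      if_congr (or_iff_right (by omega : n ≠ 1)) rfl rfl]
    split_ifs <;> rfl
  split_ifs at hmod <;> omega
end

section
/- For every positive integer n with n ≡ 2 (mod 6) and n > 2, the sum of the binomial coefficients C(n,i) over all indices i with 0 ≤ i ≤ n and i ≡ 1 (mod 6) is congruent to 1 modulo 3; that is, C(n,1) + C(n,7) + ⋯ + C(n,n-1) ≡ 1 (mod 3). -/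
/-!
In the group algebra `𝔽₃[ℤ/6]` with generator `X`, the coefficient of `r` in `(1 + X)^n` is the
sum of `C(n,i)` over `i ≡ r (mod 6)`. Since `X^6 = 1` and `(1 + X)^3 = 1 + X^3` in characteristic 3,
`(1 + X)^12 = (1 + X)^6`, so the powers `(1 + X)^n` are periodic with period 6 from `n = 6` on.
Hence for `n ≡ 2 (mod 6)`, `n > 2`, the sum is the one for `n = 8`, namely `C(8,1) + C(8,7) = 16`.
-/

open Finset AddMonoidAlgebra

theorem AddMonoidAlgebra.coeff_one_add_single_pow {R M : Type*} [CommSemiring R]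
    [AddCommMonoid M] [DecidableEq M] (g m : M) (n : ℕ) :
    ((1 + single g 1 : R[M]) ^ n).coeff m =
      ∑ i ∈ range (n + 1) with i • g = m, (n.choose i : R) := by
  rw [add_comm, add_pow, coeff_sum, sum_filter]
  simp [single_pow, natCast_def, single_mul_single, Finsupp.single_apply]

section CharThree

variable {R : Type*} [CommRing R] {x : R}

theorem one_add_pow_twelve_of_pow_six_eq_one (h3 : (3 : R) = 0) (hx : x ^ 6 = 1) :
    (1 + x) ^ 12 = (1 + x) ^ 6 := by
  have hcube : (1 + x) ^ 3 = 1 + x ^ 3 := by linear_combination (x + x ^ 2) * h3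
  calc (1 + x) ^ 12 = (1 + x ^ 3) ^ 4 := by rw [← hcube]; ring
    _ = (1 + x ^ 3) ^ 2 := by
      linear_combination (x ^ 6 + 4 * x ^ 3 + 6) * hx + (2 + 2 * x ^ 3) * h3
    _ = (1 + x) ^ 6 := by rw [← hcube]; ring

theorem one_add_pow_add_six_add_six_mul (h3 : (3 : R) = 0) (hx : x ^ 6 = 1) (n k : ℕ) :
    (1 + x) ^ (n + 6 + 6 * k) = (1 + x) ^ (n + 6) := by
  induction k with
  | zero => rfl
  | succ k ih =>
    calc (1 + x) ^ (n + 6 + 6 * (k + 1)) = (1 + x) ^ (n + 6 * k) * (1 + x) ^ 12 := by ring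
      _ = (1 + x) ^ (n + 6 + 6 * k) := by
        rw [one_add_pow_twelve_of_pow_six_eq_one h3 hx]; ring
      _ = (1 + x) ^ (n + 6) := ih

end CharThree

/-- For every positive integer n with n ≡ 2 (mod 6) and n > 2, the sum of
C(n,i) over 0 ≤ i ≤ n with i ≡ 1 (mod 6) is ≡ 1 (mod 3). -/
theorem binom_sum_one_mod_six (n : ℕ) (hn : n % 6 = 2) (hn2 : 2 < n) :
    (∑ i ∈ (Finset.range (n + 1)).filter (fun i => i % 6 = 1), Nat.choose n i) % 3 = 1 := by
  let X : (ZMod 3)[ZMod 6] := single 1 1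
  have h3 : (3 : (ZMod 3)[ZMod 6]) = 0 := by
    rw [← map_ofNat (algebraMap (ZMod 3) (ZMod 3)[ZMod 6]) 3,
      show (OfNat.ofNat 3 : ZMod 3) = 0 from rfl, map_zero]
  have hX : X ^ 6 = 1 := by rw [single_pow]; rfl
  have hsum (N : ℕ) :
      ((∑ i ∈ range (N + 1) with i % 6 = 1, N.choose i : ℕ) : ZMod 3) = ((1 + X) ^ N).coeff 1 := by
    rw [coeff_one_add_single_pow]
    push_cast
    refine sum_congr (filter_congr fun i _ => ?_) fun _ _ => rfl
    rw [nsmul_one, ← Nat.cast_one (R := ZMod 6), ZMod.natCast_eq_natCast_iff']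
  obtain ⟨k, rfl⟩ : ∃ k, n = 2 + 6 + 6 * k := ⟨(n - 8) / 6, by omega⟩
  rw [← ZMod.val_natCast 3, hsum, one_add_pow_add_six_add_six_mul h3 hX, ← hsum]
  decide
end

section
/- For every positive integer n with n ≡ 4 (mod 6) and n > 4, the sum of the binomial coefficients C(n,i) over all indices i with 0 ≤ i ≤ n and i ≡ 5 (mod 6) is congruent to 0 modulo 3; that is, C(n,5) + C(n,11) + ⋯ + C(n,n-5) ≡ 0 (mod 3). -/
/-!
By Lucas' theorem, `C(n, i) ≡ C(n % p, i % p) * C(n / p, i / p) (mod p)`, and the first factor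
vanishes when `n % p < i % p`. For `n ≡ 4 (mod 6)` and `i ≡ 5 (mod 6)` we have `n % 3 = 1 < 2 = i % 3`,
so every summand is already divisible by `3`.
-/

theorem Nat.dvd_choose_of_mod_lt {p n k : ℕ} [Fact p.Prime] (h : n % p < k % p) :
    p ∣ n.choose k := by
  have lucas := Choose.choose_modEq_choose_mod_mul_choose_div_nat (n := n) (k := k) (p := p)
  rw [Nat.choose_eq_zero_of_lt h, zero_mul] at lucas
  exact Nat.modEq_zero_iff_dvd.mp lucas

theorem binom_sum_five_mod_six_general (n : ℕ) (hn : n % 6 = 4) :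
    (∑ i ∈ (Finset.range (n + 1)).filter (fun i => i % 6 = 5), Nat.choose n i) % 3 = 0 := by
  refine Nat.mod_eq_zero_of_dvd (Finset.dvd_sum fun i hi => Nat.dvd_choose_of_mod_lt ?_)
  have hi5 : i % 6 = 5 := (Finset.mem_filter.mp hi).2
  omega

/-- For every positive integer n with n ≡ 4 (mod 6) and n > 4, the sum of
C(n,i) over 0 ≤ i ≤ n with i ≡ 5 (mod 6) is ≡ 0 (mod 3). -/
theorem binom_sum_five_mod_six (n : ℕ) (hn : n % 6 = 4) (hn4 : 4 < n) :
    (∑ i ∈ (Finset.range (n + 1)).filter (fun i => i % 6 = 5), Nat.choose n i) % 3 = 0 :=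
  binom_sum_five_mod_six_general n hn
end

section
/- Let p be a prime such that p ≠ 2, p ≠ 5, and p is not congruent to 1 or 4 modulo 5. Then P(n + p(p-1)) ≡ P(n) (mod p) for every positive integer n. -/
open Finset

namespace ZMod

theorem isSquare_natCast_iff_mod_five (n : ℕ) :
    IsSquare (n : ZMod 5) ↔ n % 5 = 0 ∨ n % 5 = 1 ∨ n % 5 = 4 := by
  rw [← natCast_mod]
  have : n % 5 < 5 := Nat.mod_lt _ (by norm_num)
  interval_cases n % 5 <;> decide

theorem isSquare_five_iff_s17 {p : ℕ} [Fact p.Prime] (hp2 : p ≠ 2) :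
    IsSquare (5 : ZMod p) ↔ p % 5 = 0 ∨ p % 5 = 1 ∨ p % 5 = 4 := by
  have : Fact (Nat.Prime 5) := ⟨Nat.prime_five⟩
  have := exists_sq_eq_prime_iff_of_mod_four_eq_one (p := 5) (q := p) (by norm_num) hp2
  rw [Nat.cast_ofNat] at this
  rw [← this, isSquare_natCast_iff_mod_five]

theorem injOn_natCast_Ioc (p a : ℕ) : Set.InjOn (Nat.cast : ℕ → ZMod p) (Ioc a (a + p)) := by
  intro i hi j hj hij
  simp only [coe_Ioc, Set.mem_Ioc] at hi hj
  refine ((natCast_eq_natCast_iff i j p).mp hij).eq_of_abs_lt ?_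
  rw [abs_sub_lt_iff]
  omega

theorem image_natCast_Ioc (p a : ℕ) [NeZero p] :
    (Ioc a (a + p)).image (Nat.cast : ℕ → ZMod p) = univ := by
  refine eq_univ_of_card _ ?_
  rw [card_image_of_injOn (injOn_natCast_Ioc p a), Nat.card_Ioc, card]
  omega

variable {M : Type*} [CommMonoid M] {p : ℕ} [NeZero p]

theorem prod_Ioc_natCast (f : ZMod p → M) (a : ℕ) :
    ∏ i ∈ Ioc a (a + p), f i = ∏ x, f x := by
  rw [← image_natCast_Ioc p a, prod_image (injOn_natCast_Ioc p a)]

theorem prod_Icc_one_add_mul_natCast (f : ZMod p → M) (n k : ℕ) :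
    ∏ i ∈ Icc 1 (n + k * p), f i = (∏ x, f x) ^ k * ∏ i ∈ Icc 1 n, f i := by
  have hIcc (m : ℕ) : Icc 1 m = Ioc 0 m := Icc_add_one_left_eq_Ioc 0 m
  simp only [hIcc]
  induction k with
  | zero => simp
  | succ k ih =>
    rw [show n + (k + 1) * p = n + k * p + p by ring,
      ← prod_Ioc_consecutive _ (Nat.zero_le _) (Nat.le_add_right _ p), ih, prod_Ioc_natCast,
      pow_succ, mul_right_comm]

end ZMod

/-- If p is a prime with p ≠ 2, p ≠ 5, and p not congruent to 1 or 4 mod 5,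
then P(n + p(p-1)) ≡ P(n) (mod p) for every positive integer n. -/
theorem P_period_mod_prime (p : ℕ) (hp : p.Prime) (h2 : p ≠ 2) (h5 : p ≠ 5)
    (h1mod : p % 5 ≠ 1) (h4mod : p % 5 ≠ 4) :
    ∀ n : ℕ, 1 ≤ n → P (n + p * (p - 1)) ≡ P n [ZMOD (p : ℤ)] := by
  intro n _
  have := Fact.mk hp
  have h0mod : p % 5 ≠ 0 := fun h0 =>
    h5 ((Nat.prime_dvd_prime_iff_eq Nat.prime_five hp).mp (Nat.dvd_of_mod_eq_zero h0)).symm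
  have hsq : ¬ IsSquare (5 : ZMod p) := by
    rw [ZMod.isSquare_five_iff_s17 h2]
    omega
  set f : ZMod p → ZMod p := fun x => (4 * x - 5) ^ 2 - 5
  have hf : ∀ x, f x ≠ 0 := fun x hx => hsq ⟨4 * x - 5, by linear_combination -hx⟩
  have hP : ∀ m, (P m : ZMod p) = ∏ i ∈ Icc 1 m, f i := fun m => by simp [P, f]
  rw [← ZMod.intCast_eq_intCast_iff, hP, hP, mul_comm p, ZMod.prod_Icc_one_add_mul_natCast,
    ZMod.pow_card_sub_one_eq_one (prod_ne_zero_iff.mpr fun x _ => hf x), one_mul]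
end
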